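/- Assume Γ(a,b) contains some matrix with support included in Supp(X_0), and let X_∞ be the limit of the IPFP sequence (X_n)_{n≥0}. Then for every (i,j) ∈ Supp(X_0) \ Supp(X_∞), the infinite product R_i(X_0)·C_j(X_1)·R_i(X_2)·C_j(X_3)·⋯ diverges to +∞ (i.e. the partial products tend to +∞). -/

import Mathlib

/-!
Each step of the IPFP divides the `(i,j)` entry by the current factor `R_i` or `C_j`, so
`X_n(i,j) = X_0(i,j) / P_n`, where `P_n` is the `n`-th partial product. Positivity is preserved
along the sequence, so if `X_n(i,j) → 0` while `X_0(i,j) > 0`, then `P_n → +∞`.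
-/

open Filter Topology

namespace IPFP

variable {p q : ℕ}

/-- Row sums `X(i,+)`. -/
noncomputable def rowSum (X : Matrix (Fin p) (Fin q) ℝ) (i : Fin p) : ℝ := ∑ j, X i j

/-- Column sums `X(+,j)`. -/
noncomputable def colSum (X : Matrix (Fin p) (Fin q) ℝ) (j : Fin q) : ℝ := ∑ i, X i j

/-- `R_i(X) = X(i,+)/a_i`. -/
noncomputable def Rrat (a : Fin p → ℝ) (X : Matrix (Fin p) (Fin q) ℝ) (i : Fin p) : ℝ :=
  rowSum X i / a i

/-- `C_j(X) = X(+,j)/b_j`. -/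
noncomputable def Crat (b : Fin q → ℝ) (X : Matrix (Fin p) (Fin q) ℝ) (j : Fin q) : ℝ :=
  colSum X j / b j

/-- `T_R(X)(i,j) = X(i,j)/R_i(X)`. -/
noncomputable def TR (a : Fin p → ℝ) (X : Matrix (Fin p) (Fin q) ℝ) :
    Matrix (Fin p) (Fin q) ℝ :=
  fun i j => X i j / Rrat a X i

/-- `T_C(X)(i,j) = X(i,j)/C_j(X)`. -/
noncomputable def TC (b : Fin q → ℝ) (X : Matrix (Fin p) (Fin q) ℝ) :
    Matrix (Fin p) (Fin q) ℝ :=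
  fun i j => X i j / Crat b X j

/-- The IPFP sequence: `X_0 = X0`, `X_{2n+1} = T_R(X_{2n})`, `X_{2n+2} = T_C(X_{2n+1})`. -/
noncomputable def ipfp (a : Fin p → ℝ) (b : Fin q → ℝ) (X0 : Matrix (Fin p) (Fin q) ℝ) :
    ℕ → Matrix (Fin p) (Fin q) ℝ
  | 0 => X0
  | n + 1 => if Even n then TR a (ipfp a b X0 n) else TC b (ipfp a b X0 n)

/-- Membership in `Γ₀`: nonnegative entries, positive row and column sums. -/
def memGamma0 (X : Matrix (Fin p) (Fin q) ℝ) : Prop :=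
  (∀ i j, 0 ≤ X i j) ∧ (∀ i, 0 < rowSum X i) ∧ (∀ j, 0 < colSum X j)

/-- Membership in `Γ₁`: member of `Γ₀` with total sum `1`. -/
def memGamma1 (X : Matrix (Fin p) (Fin q) ℝ) : Prop :=
  memGamma0 X ∧ ∑ i, ∑ j, X i j = 1

/-- Membership in `Γ(a,b)`: member of `Γ₀` with row marginals `a` and column marginals `b`. -/
def memGamma (a : Fin p → ℝ) (b : Fin q → ℝ) (X : Matrix (Fin p) (Fin q) ℝ) : Prop :=
  memGamma0 X ∧ (∀ i, rowSum X i = a i) ∧ (∀ j, colSum X j = b j)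

/-- `Supp(X) ⊆ Supp(Y)`. -/
def suppSubset (X Y : Matrix (Fin p) (Fin q) ℝ) : Prop :=
  ∀ i j, 0 < X i j → 0 < Y i j

/-- Membership in `Γ(a,b,X0)`: member of `Γ(a,b)` with support contained in `Supp(X0)`. -/
def memGammaSub (a : Fin p → ℝ) (b : Fin q → ℝ) (X0 X : Matrix (Fin p) (Fin q) ℝ) : Prop :=
  memGamma a b X ∧ suppSubset X X0

/-- Relative entropy (I-divergence) `D(Y‖X) = Σ_{(i,j) ∈ Supp X} Y(i,j)·ln(Y(i,j)/X(i,j))`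
(finite expression; it agrees with the relative entropy whenever `Supp Y ⊆ Supp X`,
with the convention `0·ln 0 = 0`). -/
noncomputable def relEnt (Y X : Matrix (Fin p) (Fin q) ℝ) : ℝ :=
  ∑ i, ∑ j, if 0 < X i j then Y i j * Real.log (Y i j / X i j) else 0

/-- A real sequence converges to `l` at an at least geometric rate:
it tends to `l` and `limsup_n |x_n − l|^{1/n} < 1`. -/
noncomputable def geomSeq (x : ℕ → ℝ) (l : ℝ) : Prop :=
  Tendsto x atTop (nhds l) ∧
    Filter.limsup (fun n : ℕ => |x n - l| ^ ((n : ℝ)⁻¹)) atTop < 1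

/-- A matrix sequence converges to `L` at an at least geometric rate (using the
`ℓ¹` norm on entries): it tends to `L` and `limsup_n ‖X_n − L‖^{1/n} < 1`. -/
noncomputable def geomMat (X : ℕ → Matrix (Fin p) (Fin q) ℝ)
    (L : Matrix (Fin p) (Fin q) ℝ) : Prop :=
  Tendsto X atTop (nhds L) ∧
    Filter.limsup (fun n : ℕ => (∑ i, ∑ j, |X n i j - L i j|) ^ ((n : ℝ)⁻¹)) atTop < 1

end IPFP

theorem Finset.sum_div_pos_of_sum_pos {ι : Type*} {s : Finset ι} {f c : ι → ℝ}
    (hf : ∀ i ∈ s, 0 ≤ f i) (hc : ∀ i ∈ s, 0 < c i) (h : 0 < ∑ i ∈ s, f i) :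
    0 < ∑ i ∈ s, f i / c i := by
  obtain ⟨k, hks, hk⟩ := (Finset.sum_pos_iff_of_nonneg hf).1 h
  exact Finset.sum_pos' (fun i hi => div_nonneg (hf i hi) (hc i hi).le)
    ⟨k, hks, div_pos hk (hc k hks)⟩

theorem tendsto_atTop_of_div_tendsto_zero {𝕜 : Type*} [Field 𝕜] [LinearOrder 𝕜]
    [IsStrictOrderedRing 𝕜] [TopologicalSpace 𝕜] [OrderTopology 𝕜]
    {P : ℕ → 𝕜} {c : 𝕜} (hc : 0 < c) (hP : ∀ n, 0 < P n)
    (h : Tendsto (fun n => c / P n) atTop (𝓝 0)) : Tendsto P atTop atTop := by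
  have hwithin : Tendsto (fun n => c / P n) atTop (𝓝[>] 0) :=
    tendsto_nhdsWithin_of_tendsto_nhds_of_eventually_within _ h
      (Eventually.of_forall fun n => div_pos hc (hP n))
  have hinv := hwithin.inv_tendsto_nhdsGT_zero.const_mul_atTop hc
  refine hinv.congr fun n => ?_
  simp only [Pi.inv_apply, inv_div]
  field_simp [(hP n).ne', hc.ne']

namespace IPFP

variable {p q : ℕ}

noncomputable def stepFactor (a : Fin p → ℝ) (b : Fin q → ℝ) (X0 : Matrix (Fin p) (Fin q) ℝ)
    (i : Fin p) (j : Fin q) (m : ℕ) : ℝ :=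
  if Even m then Rrat a (ipfp a b X0 m) i else Crat b (ipfp a b X0 m) j

variable {a : Fin p → ℝ} {b : Fin q → ℝ} {X X0 : Matrix (Fin p) (Fin q) ℝ}

theorem Rrat_pos (ha : ∀ i, 0 < a i) (hX : memGamma0 X) (i : Fin p) : 0 < Rrat a X i :=
  div_pos (hX.2.1 i) (ha i)

theorem Crat_pos (hb : ∀ j, 0 < b j) (hX : memGamma0 X) (j : Fin q) : 0 < Crat b X j :=
  div_pos (hX.2.2 j) (hb j)

theorem memGamma0_TR (ha : ∀ i, 0 < a i) (hX : memGamma0 X) : memGamma0 (TR a X) := by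
  have hR := Rrat_pos ha hX
  refine ⟨fun i j => div_nonneg (hX.1 i j) (hR i).le, fun i => ?_, fun j => ?_⟩
  · have hrow : rowSum (TR a X) i = rowSum X i / Rrat a X i := by
      simp only [rowSum, TR, Finset.sum_div]
    rw [hrow]
    exact div_pos (hX.2.1 i) (hR i)
  · exact Finset.sum_div_pos_of_sum_pos (fun i _ => hX.1 i j) (fun i _ => hR i) (hX.2.2 j)

theorem memGamma0_TC (hb : ∀ j, 0 < b j) (hX : memGamma0 X) : memGamma0 (TC b X) := by
  have hC := Crat_pos hb hX
  refine ⟨fun i j => div_nonneg (hX.1 i j) (hC j).le, fun i => ?_, fun j => ?_⟩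
  · exact Finset.sum_div_pos_of_sum_pos (fun j _ => hX.1 i j) (fun j _ => hC j) (hX.2.1 i)
  · have hcol : colSum (TC b X) j = colSum X j / Crat b X j := by
      simp only [colSum, TC, Finset.sum_div]
    rw [hcol]
    exact div_pos (hX.2.2 j) (hC j)

theorem memGamma0_ipfp (ha : ∀ i, 0 < a i) (hb : ∀ j, 0 < b j) (hX0 : memGamma0 X0) (n : ℕ) :
    memGamma0 (ipfp a b X0 n) := by
  induction n with
  | zero => exact hX0
  | succ n ih =>
    by_cases hn : Even n
    · simpa only [ipfp, hn, if_true] using memGamma0_TR ha ih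
    · simpa only [ipfp, hn, if_false] using memGamma0_TC hb ih

theorem stepFactor_pos (ha : ∀ i, 0 < a i) (hb : ∀ j, 0 < b j) (hX0 : memGamma0 X0)
    (i : Fin p) (j : Fin q) (m : ℕ) : 0 < stepFactor a b X0 i j m := by
  unfold stepFactor
  split_ifs
  · exact Rrat_pos ha (memGamma0_ipfp ha hb hX0 m) i
  · exact Crat_pos hb (memGamma0_ipfp ha hb hX0 m) j

theorem ipfp_succ_apply (i : Fin p) (j : Fin q) (m : ℕ) :
    ipfp a b X0 (m + 1) i j = ipfp a b X0 m i j / stepFactor a b X0 i j m := by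
  unfold stepFactor
  split_ifs with hm <;> simp only [ipfp, hm, if_true, if_false, TR, TC]

theorem ipfp_apply_eq_div_prod (i : Fin p) (j : Fin q) (n : ℕ) :
    ipfp a b X0 n i j = X0 i j / ∏ m ∈ Finset.range n, stepFactor a b X0 i j m := by
  induction n with
  | zero => simp [ipfp]
  | succ n ih => rw [ipfp_succ_apply, ih, Finset.prod_range_succ, div_div]

end IPFP

open IPFP

theorem ipfp_infinite_product_diverges_general
    (p q : ℕ)
    (a : Fin p → ℝ) (b : Fin q → ℝ)
    (ha : ∀ i, 0 < a i) (hb : ∀ j, 0 < b j)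
    (X0 : Matrix (Fin p) (Fin q) ℝ) (hX0 : memGamma1 X0)
    (Xinf : Matrix (Fin p) (Fin q) ℝ)
    (hlim : Tendsto (ipfp a b X0) atTop (nhds Xinf)) :
    ∀ i j, 0 < X0 i j → ¬ 0 < Xinf i j →
      Tendsto (fun n => ∏ m ∈ Finset.range n,
          (if Even m then Rrat a (ipfp a b X0 m) i else Crat b (ipfp a b X0 m) j))
        atTop atTop := by
  intro i j hX0ij hXinfij
  have hentry : Tendsto (fun n => ipfp a b X0 n i j) atTop (𝓝 (Xinf i j)) :=
    ((continuous_apply_apply i j).tendsto Xinf).comp hlim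
  have hXinf_zero : Xinf i j = 0 :=
    le_antisymm (not_lt.1 hXinfij)
      (ge_of_tendsto' hentry fun n => (memGamma0_ipfp ha hb hX0.1 n).1 i j)
  rw [hXinf_zero] at hentry
  simp only [ipfp_apply_eq_div_prod] at hentry
  exact tendsto_atTop_of_div_tendsto_zero hX0ij
    (fun n => Finset.prod_pos fun m _ => stepFactor_pos ha hb hX0.1 i j m) hentry

/-- Assume `Γ(a,b)` contains a matrix with support included in
`Supp(X_0)`, and let `X_∞` be the limit of the IPFP sequence. Then for every
`(i,j) ∈ Supp(X_0) \ Supp(X_∞)`, the partial products of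
`R_i(X_0)·C_j(X_1)·R_i(X_2)·C_j(X_3)·⋯` tend to `+∞`. -/
theorem ipfp_infinite_product_diverges
    (p q : ℕ) (hp : 2 ≤ p) (hq : 2 ≤ q)
    (a : Fin p → ℝ) (b : Fin q → ℝ)
    (ha : ∀ i, 0 < a i) (hb : ∀ j, 0 < b j)
    (hsa : ∑ i, a i = 1) (hsb : ∑ j, b j = 1)
    (X0 : Matrix (Fin p) (Fin q) ℝ) (hX0 : memGamma1 X0)
    (h : ∃ S, memGammaSub a b X0 S)
    (Xinf : Matrix (Fin p) (Fin q) ℝ)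
    (hlim : Tendsto (ipfp a b X0) atTop (nhds Xinf)) :
    ∀ i j, 0 < X0 i j → ¬ 0 < Xinf i j →
      Tendsto (fun n => ∏ m ∈ Finset.range n,
          (if Even m then Rrat a (ipfp a b X0 m) i else Crat b (ipfp a b X0 m) j))
        atTop atTop :=
  ipfp_infinite_product_diverges_general p q a b ha hb X0 hX0 Xinf hlim
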